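/- arXiv:2212.00693 — 6 statements merged into one kernel-verified Lean document; each statement's English description precedes it below -/
import Mathlib

section
/- For every pair of natural numbers p and every natural number m, and every real x with |x| < 1, the series ∑_{k=m}^{∞} x^k·(k+p)!/k! converges, and there exists a real polynomial P in two variables of total degree at most 2p (independent of m and x) such that ∑_{k=m}^{∞} x^k·(k+p)!/k! = (x^m/(1−x)^{p+1})·P(x, m) for all m ∈ ℕ and all x ∈ (−1,1). -/
/-!
Write `D_p(n) = (n+1)⋯(n+p)` and `S_p(n) = ∑_{k ≥ n} x^k D_p(k)`. The forward difference
`D_{p+1}(n+1) - D_{p+1}(n) = (p+1) D_p(n+1)`, summed by parts against the geometric weight `x^k`,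
gives `(1 - x) S_{p+1}(n) = x^n D_{p+1}(n) + (p+1) S_p(n+1)`. By induction on `p`,
`S_p(m) = x^m / (1-x)^(p+1) · P_p(x, m)` with `P_0 = 1` and
`P_{p+1}(x, m) = (1-x)^(p+1) D_{p+1}(m) + (p+1) x P_p(x, m+1)`,
and each step raises the total degree by at most two.
-/

open MvPolynomial Finset

theorem Nat.add_one_ascFactorial_succ (n p : ℕ) :
    (n + 1).ascFactorial (p + 1) = n.ascFactorial (p + 1) + (p + 1) * (n + 1).ascFactorial p := by
  simpa [ascPochhammer_nat_eq_ascFactorial] using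
    congr_arg (Polynomial.eval n) (ascPochhammer_succ_comp_X_add_one (S := ℕ) p)

theorem one_sub_mul_eq_of_hasSum_pow_mul {R : Type*} [CommRing R] [TopologicalSpace R]
    [IsTopologicalRing R] [T2Space R] {x S T : R} {f : ℕ → R} (n : ℕ)
    (hS : HasSum (fun k ↦ x ^ (k + n) * f (k + n)) S)
    (hT : HasSum (fun k ↦ x ^ (k + n + 1) * (f (k + n + 1) - f (k + n))) T) :
    (1 - x) * S = x ^ n * f n + T := by
  have hshift : HasSum (fun k ↦ x ^ (k + n + 1) * f (k + n + 1)) (S - x ^ n * f n) := by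
    simpa [add_right_comm] using (hasSum_nat_add_iff' 1).2 hS
  have hT' : T = S - x ^ n * f n - x * S :=
    hT.unique (by simpa only [mul_sub, pow_succ', mul_assoc] using hshift.sub (hS.mul_left x))
  linear_combination -hT'

theorem summable_pow_mul_ascFactorial {R : Type*} [NormedRing R] [HasSummableGeomSeries R]
    {x : R} (hx : ‖x‖ < 1) (p n : ℕ) :
    Summable (fun k ↦ x ^ (k + n) * ((k + n + 1).ascFactorial p : R)) := by
  refine (summable_nat_add_iff (f := fun k ↦ x ^ k * ((k + 1).ascFactorial p : R)) n).2 ?_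
  simpa [Nat.add_descFactorial_eq_ascFactorial, Nat.cast_comm]
    using summable_descFactorial_mul_geometric_of_norm_lt_one p hx

section Polynomials

variable {R : Type*} [CommRing R]

noncomputable def risingPoly (s p : ℕ) : MvPolynomial (Fin 2) R :=
  ∏ i ∈ range p, (X 1 + C ((s + i + 1 : ℕ) : R))

/-- `tailPoly p s` is `P_p(x, m + s)` as a polynomial in `(x, m) = (X 0, X 1)`; carrying the
shift `s` avoids substituting `m + 1` for `m` in the recursion. -/
noncomputable def tailPoly : ℕ → ℕ → MvPolynomial (Fin 2) R
  | 0, _ => 1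
  | p + 1, s =>
    (1 - X 0) ^ (p + 1) * risingPoly s (p + 1) + C ((p + 1 : ℕ) : R) * X 0 * tailPoly p (s + 1)

theorem eval_risingPoly (x : R) (m s p : ℕ) :
    eval ![x, (m : R)] (risingPoly s p) = ((m + s + 1).ascFactorial p : R) := by
  simp only [risingPoly, Nat.ascFactorial_eq_prod_range, map_prod, map_add, eval_X, eval_C]
  push_cast
  exact prod_congr rfl fun i _ ↦ by ring

theorem totalDegree_risingPoly_le [Nontrivial R] (s p : ℕ) :
    (risingPoly s p : MvPolynomial (Fin 2) R).totalDegree ≤ p := by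
  refine (totalDegree_finsetProd _ _).trans ?_
  calc ∑ i ∈ range p, (X 1 + C ((s + i + 1 : ℕ) : R) : MvPolynomial (Fin 2) R).totalDegree
      ≤ ∑ _i ∈ range p, 1 :=
        sum_le_sum fun i _ ↦ (totalDegree_add _ _).trans
          (max_le (totalDegree_X _).le (by rw [totalDegree_C]; omega))
    _ = p := by simp

theorem totalDegree_tailPoly_le [Nontrivial R] (p s : ℕ) :
    (tailPoly p s : MvPolynomial (Fin 2) R).totalDegree ≤ 2 * p := by
  induction p generalizing s with
  | zero => simp [tailPoly]
  | succ p ih =>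
    have h1 : ((1 : MvPolynomial (Fin 2) R) - X 0).totalDegree ≤ 1 :=
      (totalDegree_sub _ _).trans (by simp)
    refine (totalDegree_add _ _).trans (max_le ?_ ?_)
    · calc _ ≤ (p + 1) * 1 + (p + 1) := (totalDegree_mul _ _).trans
            (add_le_add ((totalDegree_pow _ _).trans (Nat.mul_le_mul_left _ h1))
              (totalDegree_risingPoly_le _ _))
        _ ≤ 2 * (p + 1) := by omega
    · calc _ ≤ 0 + 1 + 2 * p := (totalDegree_mul _ _).trans
            (add_le_add ((totalDegree_mul _ _).trans
              (add_le_add (totalDegree_C _).le (totalDegree_X _).le)) (ih _))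
        _ ≤ 2 * (p + 1) := by omega

end Polynomials

theorem hasSum_pow_mul_ascFactorial {𝕜 : Type*} [NormedField 𝕜] [CompleteSpace 𝕜] {x : 𝕜}
    (hx : ‖x‖ < 1) (p m s : ℕ) :
    HasSum (fun k ↦ x ^ (k + (m + s)) * ((k + (m + s) + 1).ascFactorial p : 𝕜))
      (x ^ (m + s) / (1 - x) ^ (p + 1) * eval ![x, (m : 𝕜)] (tailPoly p s)) := by
  have hx1 : 1 - x ≠ 0 := sub_ne_zero.2 fun h ↦ by simp [← h] at hx
  induction p generalizing s with
  | zero =>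
    simpa [tailPoly, pow_add, div_eq_mul_inv, mul_comm] using
      (hasSum_geometric_of_norm_lt_one hx).mul_left (x ^ (m + s))
  | succ p ih =>
    obtain ⟨S, hS⟩ := summable_pow_mul_ascFactorial hx (p + 1) (m + s)
    have hdiff (k : ℕ) : x ^ (k + (m + s) + 1) * (((k + (m + s) + 1 + 1).ascFactorial (p + 1) : 𝕜)
        - (k + (m + s) + 1).ascFactorial (p + 1)) =
        (p + 1) * (x ^ (k + (m + (s + 1))) * ((k + (m + (s + 1)) + 1).ascFactorial p : 𝕜)) := by
      rw [Nat.add_one_ascFactorial_succ, show k + (m + (s + 1)) = k + (m + s) + 1 by omega]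
      push_cast
      ring
    have hT := (ih (s + 1)).mul_left ((p : 𝕜) + 1)
    simp only [← hdiff] at hT
    have hrec := one_sub_mul_eq_of_hasSum_pow_mul
      (f := fun j ↦ ((j + 1).ascFactorial (p + 1) : 𝕜)) (m + s) hS hT
    convert hS using 1
    simp only [tailPoly, map_add, map_mul, map_pow, map_sub, map_one, eval_X, eval_C,
      eval_risingPoly, Matrix.cons_val_zero]
    push_cast
    field_simp at hrec ⊢
    linear_combination -hrec

/-- For every `p : ℕ` there exists a real polynomial `P` in two variables of total
degree at most `2p` (independent of `m` and `x`) such that for all `m : ℕ` and all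
real `x` with `|x| < 1`, the series `∑_{k=m}^∞ x^k (k+p)!/k!` converges and equals
`(x^m / (1-x)^{p+1}) · P(x, m)`. -/
theorem stmt_1 (p : ℕ) :
    ∃ P : MvPolynomial (Fin 2) ℝ, P.totalDegree ≤ 2 * p ∧
      ∀ (m : ℕ) (x : ℝ), |x| < 1 →
        HasSum
          (fun k : ℕ => x ^ (k + m) * (((k + m + p).factorial : ℝ) / ((k + m).factorial : ℝ)))
          (x ^ m / (1 - x) ^ (p + 1) * MvPolynomial.eval ![x, (m : ℝ)] P) := by
  refine ⟨tailPoly p 0, totalDegree_tailPoly_le p 0, fun m x hx ↦ ?_⟩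
  have hfact (n : ℕ) : ((n + p).factorial : ℝ) / n.factorial = (n + 1).ascFactorial p := by
    rw [← Nat.factorial_mul_ascFactorial, Nat.cast_mul, mul_div_cancel_left₀ _ (by positivity)]
  simpa only [hfact, add_zero] using
    hasSum_pow_mul_ascFactorial (x := x) (by rwa [Real.norm_eq_abs]) p m 0
end

section
/- For all natural numbers m and p and every real x with |x| < 1, the p-th derivative of the function x ↦ x^{p+m}/(1−x) equals the convergent series ∑_{k=m}^{∞} x^k·(k+p)!/k!. -/
lemma fact_ratio_le (n q : ℕ) : (n + q).factorial ≤ n.factorial * (n + q) ^ q := by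
  induction q with
  | zero => simp
  | succ q ih =>
    calc (n + (q+1)).factorial = (n + q + 1) * (n + q).factorial := by
          rw [show n + (q+1) = (n+q)+1 from rfl, Nat.factorial_succ]
      _ ≤ (n + q + 1) * (n.factorial * (n + q) ^ q) := Nat.mul_le_mul_left _ ih
      _ ≤ (n + q + 1) * (n.factorial * (n + q + 1) ^ q) := by
          exact Nat.mul_le_mul_left _ (Nat.mul_le_mul_left _
            (Nat.pow_le_pow_left (Nat.le_succ _) q))
      _ = n.factorial * (n + (q+1)) ^ (q+1) := by ring

lemma pow_add_le (n q : ℕ) : (n + q) ^ q ≤ 2 ^ q * (n ^ q + q ^ q) := by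
  rcases le_total n q with h | h
  · calc (n + q) ^ q ≤ (2*q) ^ q := Nat.pow_le_pow_left (by omega) q
      _ = 2 ^ q * q ^ q := by rw [mul_pow]
      _ ≤ 2 ^ q * (n ^ q + q ^ q) := Nat.mul_le_mul_left _ (by omega)
  · calc (n + q) ^ q ≤ (2*n) ^ q := Nat.pow_le_pow_left (by omega) q
      _ = 2 ^ q * n ^ q := by rw [mul_pow]
      _ ≤ 2 ^ q * (n ^ q + q ^ q) := Nat.mul_le_mul_left _ (by omega)

lemma sumT (q : ℕ) {x : ℝ} (hx : |x| < 1) :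
    Summable (fun n : ℕ => |x| ^ n * (((n + q).factorial : ℝ) / (n.factorial : ℝ))) := by
  have hxn : ‖|x|‖ < 1 := by rwa [Real.norm_eq_abs, abs_abs]
  have h1 : Summable (fun n : ℕ => (2:ℝ) ^ q * ((n:ℝ) ^ q * |x| ^ n)) :=
    (summable_pow_mul_geometric_of_norm_lt_one q hxn).mul_left _
  have h2 : Summable (fun n : ℕ => ((2:ℝ) ^ q * (q:ℝ) ^ q) * |x| ^ n) :=
    (summable_geometric_of_abs_lt_one (by rwa [abs_abs])).mul_left _
  refine Summable.of_nonneg_of_le (fun n => ?_) (fun n => ?_) (h1.add h2)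
  · positivity
  · have hfne : (0:ℝ) < (n.factorial : ℝ) := by positivity
    have hratio : (((n + q).factorial : ℝ) / (n.factorial : ℝ)) ≤ (((n + q) ^ q : ℕ) : ℝ) := by
      rw [div_le_iff₀ hfne]
      calc ((n + q).factorial : ℝ) ≤ ((n.factorial * (n + q) ^ q : ℕ) : ℝ) := by
            exact_mod_cast fact_ratio_le n q
        _ = (((n + q) ^ q : ℕ) : ℝ) * (n.factorial : ℝ) := by push_cast; ring
    have hpow : (((n + q) ^ q : ℕ) : ℝ) ≤ 2 ^ q * ((n:ℝ) ^ q + (q:ℝ) ^ q) := by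
      have := pow_add_le n q
      exact_mod_cast this
    have hxnn : (0:ℝ) ≤ |x| ^ n := by positivity
    calc |x| ^ n * (((n + q).factorial : ℝ) / (n.factorial : ℝ))
        ≤ |x| ^ n * (2 ^ q * ((n:ℝ) ^ q + (q:ℝ) ^ q)) :=
          mul_le_mul_of_nonneg_left (hratio.trans hpow) hxnn
      _ = 2 ^ q * ((n:ℝ) ^ q * |x| ^ n) + (2 ^ q * (q:ℝ) ^ q) * |x| ^ n := by ring

lemma sumS (m q : ℕ) {x : ℝ} (hx : |x| < 1) :
    Summable (fun k : ℕ => x ^ (k + m) * (((k + m + q).factorial : ℝ) / ((k + m).factorial : ℝ))) := by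
  rw [← summable_abs_iff]
  have h : Summable (fun n : ℕ =>
      |x| ^ (n + m) * (((n + m + q).factorial : ℝ) / ((n + m).factorial : ℝ))) :=
    (summable_nat_add_iff m).mpr (sumT q hx)
  refine h.congr fun k => ?_
  rw [abs_mul, abs_pow, abs_of_nonneg (show (0:ℝ) ≤ ((k + m + q).factorial : ℝ) / ((k + m).factorial : ℝ)
    from div_nonneg (Nat.cast_nonneg _) (Nat.cast_nonneg _))]

lemma key (p : ℕ) : ∀ (m : ℕ) (x : ℝ), |x| < 1 →
    HasSum
      (fun k : ℕ => x ^ (k + m) * (((k + m + p).factorial : ℝ) / ((k + m).factorial : ℝ)))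
      (iteratedDeriv p (fun y : ℝ => y ^ (p + m) / (1 - y)) x) := by
  induction p with
  | zero =>
    intro m x hx
    rw [iteratedDeriv_zero]
    have h : HasSum (fun k : ℕ => x ^ m * x ^ k) (x ^ m * (1 - x)⁻¹) :=
      (hasSum_geometric_of_abs_lt_one hx).mul_left _
    have heq : (fun k : ℕ => x ^ (k + m) * (((k + m + 0).factorial : ℝ) / ((k + m).factorial : ℝ)))
        = fun k : ℕ => x ^ m * x ^ k := by
      funext k
      rw [Nat.add_zero, div_self (Nat.cast_ne_zero.mpr (Nat.factorial_ne_zero _)), mul_one,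
        pow_add, mul_comm]
    rw [heq, show 0 + m = m from Nat.zero_add m]
    simpa [div_eq_mul_inv] using h
  | succ p ih =>
    intro m x hx
    -- the function, rewritten to match the induction hypothesis with m+1
    have hfun : (fun y : ℝ => y ^ (p + 1 + m) / (1 - y))
        = fun y : ℝ => y ^ (p + (m + 1)) / (1 - y) := by
      rw [show p + 1 + m = p + (m + 1) by omega]
    set c : ℕ → ℝ := fun k => ((k + (m + 1) + p).factorial : ℝ) / ((k + (m + 1)).factorial : ℝ)
      with hc
    set g : ℕ → ℝ → ℝ := fun k y => y ^ (k + (m + 1)) * c k with hg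
    set g' : ℕ → ℝ → ℝ := fun k y => (((k + m + 1 : ℕ) : ℝ) * y ^ (k + m)) * c k with hg'
    have hck : ∀ k : ℕ, ((k + m + 1 : ℕ) : ℝ) * c k
        = ((k + m + (p + 1)).factorial : ℝ) / ((k + m).factorial : ℝ) := by
      intro k
      have h1 : ((k + (m + 1)).factorial : ℝ) = ((k + m + 1 : ℕ) : ℝ) * ((k + m).factorial : ℝ) := by
        rw [show k + (m + 1) = (k + m) + 1 from rfl, Nat.factorial_succ]; push_cast; ring
      have h2 : k + (m + 1) + p = k + m + (p + 1) := by omega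
      simp only [hc]
      rw [h2, h1]
      have hne1 : ((k + m + 1 : ℕ) : ℝ) ≠ 0 := by positivity
      have hne2 : ((k + m).factorial : ℝ) ≠ 0 := by positivity
      field_simp
    -- IH applied to m+1 : for every y of abs < 1
    have hIH : ∀ y : ℝ, |y| < 1 →
        iteratedDeriv p (fun z : ℝ => z ^ (p + (m + 1)) / (1 - z)) y = ∑' k, g k y := by
      intro y hy
      exact ((ih (m + 1) y hy)).tsum_eq.symm
    -- choose a radius
    set r : ℝ := (1 + |x|) / 2 with hr
    have hxr : |x| < r := by rw [hr]; linarith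
    have hr1 : r < 1 := by rw [hr]; linarith
    have hr0 : 0 ≤ r := by positivity
    have hrabs : |r| < 1 := by rwa [abs_of_nonneg hr0]
    -- summable bound for derivatives
    have hu : Summable (fun k : ℕ =>
        r ^ (k + m) * (((k + m + (p + 1)).factorial : ℝ) / ((k + m).factorial : ℝ))) :=
      sumS m (p + 1) hrabs
    -- each term has the obvious derivative
    have hder : ∀ (k : ℕ) (y : ℝ), HasDerivAt (g k) (g' k y) y := by
      intro k y
      exact (hasDerivAt_pow (k + (m + 1)) y).mul_const (c k)
    -- the bound on derivatives in the ball
    have hbound : ∀ (k : ℕ) (y : ℝ), y ∈ Metric.ball (0:ℝ) r → ‖g' k y‖ ≤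
        r ^ (k + m) * (((k + m + (p + 1)).factorial : ℝ) / ((k + m).factorial : ℝ)) := by
      intro k y hy
      have hyr : |y| < r := by simpa [Real.norm_eq_abs] using hy
      have hcnn : 0 ≤ c k := by rw [hc]; positivity
      rw [← hck k]
      rw [hg']
      rw [Real.norm_eq_abs, abs_mul, abs_mul, abs_pow]
      rw [Nat.abs_cast]
      have h1 : |y| ^ (k + m) ≤ r ^ (k + m) := pow_le_pow_left₀ (abs_nonneg y) hyr.le _
      have h2 : |c k| = c k := abs_of_nonneg hcnn
      rw [h2]
      calc ((k + m + 1 : ℕ) : ℝ) * |y| ^ (k + m) * c k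
          ≤ ((k + m + 1 : ℕ) : ℝ) * r ^ (k + m) * c k := by
            apply mul_le_mul_of_nonneg_right _ hcnn
            exact mul_le_mul_of_nonneg_left h1 (by positivity)
        _ = r ^ (k + m) * (((k + m + 1 : ℕ) : ℝ) * c k) := by ring
    -- convergence at the point x
    have hg0 : Summable fun k => g k x := (ih (m + 1) x hx).summable
    -- derivative of the sum
    have hDer : HasDerivAt (fun y : ℝ => ∑' k, g k y) (∑' k, g' k x) x := by
      refine hasDerivAt_tsum_of_isPreconnected hu Metric.isOpen_ball
        (convex_ball (0:ℝ) r).isPreconnected (fun k y hy => hder k y) hbound ?_ hg0 ?_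
      · simpa [Real.norm_eq_abs] using hxr
      · simpa [Real.norm_eq_abs] using hxr
    -- rewrite the iterated derivative
    rw [iteratedDeriv_succ, hfun]
    have hev : (iteratedDeriv p (fun z : ℝ => z ^ (p + (m + 1)) / (1 - z)))
        =ᶠ[nhds x] (fun y : ℝ => ∑' k, g k y) := by
      have hmem : Metric.ball (0:ℝ) 1 ∈ nhds x :=
        Metric.isOpen_ball.mem_nhds (by simpa [Real.norm_eq_abs] using hx)
      filter_upwards [hmem] with y hy
      exact hIH y (by simpa [Real.norm_eq_abs] using hy)
    have hderiv_eq : deriv (iteratedDeriv p (fun z : ℝ => z ^ (p + (m + 1)) / (1 - z))) x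
        = ∑' k, g' k x := by
      rw [Filter.EventuallyEq.deriv_eq hev]
      exact hDer.deriv
    rw [hderiv_eq]
    have hsum : Summable (fun k : ℕ =>
        x ^ (k + m) * (((k + m + (p + 1)).factorial : ℝ) / ((k + m).factorial : ℝ))) :=
      sumS m (p + 1) hx
    have : (∑' k, g' k x) = ∑' k : ℕ,
        x ^ (k + m) * (((k + m + (p + 1)).factorial : ℝ) / ((k + m).factorial : ℝ)) := by
      refine tsum_congr fun k => ?_
      rw [hg', ← hck k]
      ring
    rw [this]
    exact hsum.hasSum

/-- For all `m p : ℕ` and real `x` with `|x| < 1`, the `p`-th derivative of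
`x ↦ x^{p+m} / (1-x)` equals the convergent series `∑_{k=m}^∞ x^k (k+p)!/k!`. -/
theorem stmt_2 (m p : ℕ) (x : ℝ) (hx : |x| < 1) :
    HasSum
      (fun k : ℕ => x ^ (k + m) * (((k + m + p).factorial : ℝ) / ((k + m).factorial : ℝ)))
      (iteratedDeriv p (fun y : ℝ => y ^ (p + m) / (1 - y)) x) :=
  key p m x hx
end

section
/- For every real t > 0, every real x ≥ 0, and every natural number n, the n-th partial derivative in t of g satisfies g^{(n)}(t,x) = x·e^{−x²/t}·∑_{m=0}^{n} x^{2(n−m)}·t^{−(3/2 + 2n − m)}·(−1)^m·C(n,m)·Γ(3/2 + n)/Γ(3/2 + n − m), where C(n,m) is the binomial coefficient and Γ is the Gamma function. -/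
/-!
Write `f_p(s) = s^{-p} e^{-x²/s}`, so that `g(·, x) = x f_{3/2}` and
`f_p' = x² f_{p+2} - p f_{p+1}`. Differentiating termwise, the `n`-th derivative of `f_a` is
`∑_m c(n,m) x^{2(n-m)} f_{a+2n-m}`, where `c(0,0) = 1` and
`c(n+1,m+1) = c(n,m+1) - (a+2n-m) c(n,m)`. This Pascal-type recursion is solved by
`c(n,m) = (-1)^m C(n,m) (a+n-1)(a+n-2)⋯(a+n-m)`, and the falling factorial is
`Γ(a+n)/Γ(a+n-m)`.
-/

open Real

/-- `g(t,x) = x · t^{-3/2} · exp(-x²/t)`. -/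
noncomputable def g (t x : ℝ) : ℝ := x * t ^ (-(3 / 2) : ℝ) * Real.exp (-x ^ 2 / t)

open Finset Polynomial Set

theorem iteratedDeriv_eqOn_of_hasDerivAt {𝕜 F : Type*} [NontriviallyNormedField 𝕜]
    [NormedAddCommGroup F] [NormedSpace 𝕜 F] {U : Set 𝕜} (hU : IsOpen U) {f : 𝕜 → F}
    {φ : ℕ → 𝕜 → F} (h₀ : EqOn f (φ 0) U)
    (hφ : ∀ n, ∀ y ∈ U, HasDerivAt (φ n) (φ (n + 1) y) y) (n : ℕ) :
    EqOn (iteratedDeriv n f) (φ n) U := by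
  induction n with
  | zero => simpa using h₀
  | succ n ih =>
    intro y hy
    rw [iteratedDeriv_succ, (ih.eventuallyEq_of_mem (hU.mem_nhds hy)).deriv_eq]
    exact (hφ n y hy).deriv

theorem Real.Gamma_eq_descPochhammer_eval_mul {y : ℝ} {m : ℕ} (h : (m : ℝ) < y) :
    Gamma y = (descPochhammer ℝ m).eval (y - 1) * Gamma (y - m) := by
  induction m with
  | zero => simp
  | succ m ih =>
    push_cast at h
    have hpos : 0 < y - m - 1 := by linarith
    rw [ih (by linarith), descPochhammer_succ_eval, show y - m = (y - m - 1) + 1 by ring,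
      Gamma_add_one hpos.ne', Nat.cast_succ, sub_add_eq_sub_sub]
    ring

noncomputable def rpowExpInv (x p s : ℝ) : ℝ := s ^ (-p) * exp (-x ^ 2 / s)

theorem hasDerivAt_rpowExpInv (x p : ℝ) {s : ℝ} (hs : 0 < s) :
    HasDerivAt (rpowExpInv x p)
      (x ^ 2 * rpowExpInv x (p + 2) s - p * rpowExpInv x (p + 1) s) s := by
  have hexp := ((hasDerivAt_const s (-x ^ 2)).fun_div (hasDerivAt_id' s) hs.ne').exp
  refine ((hasDerivAt_rpow_const (p := -p) (Or.inl hs.ne')).fun_mul hexp).congr_deriv ?_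
  simp only [rpowExpInv, neg_add, rpow_add hs, rpow_neg hs.le, rpow_two, sub_eq_add_neg]
  field_simp
  ring

section derivSum

variable (a x : ℝ)

/-- `Γ(a+n)/Γ(a+n-m)` is written as a falling factorial: it has no junk values, so the
recursion `derivCoeff_succ_succ` holds for all `a` and `m`. -/
noncomputable def derivCoeff (n m : ℕ) : ℝ :=
  (-1) ^ m * n.choose m * (descPochhammer ℝ m).eval (a + n - 1)

noncomputable def derivSum (n : ℕ) (s : ℝ) : ℝ :=
  ∑ m ∈ range (n + 1), derivCoeff a n m * x ^ (2 * (n - m)) * rpowExpInv x (a + 2 * n - m) s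

@[simp]
theorem derivCoeff_zero_right (n : ℕ) : derivCoeff a n 0 = 1 := by
  simp [derivCoeff]

theorem derivCoeff_succ_self (n : ℕ) : derivCoeff a n (n + 1) = 0 := by
  simp [derivCoeff]

theorem derivCoeff_succ_succ (n m : ℕ) :
    derivCoeff a (n + 1) (m + 1) = derivCoeff a n (m + 1) - (a + 2 * n - m) * derivCoeff a n m := by
  have pascal : ((n + 1).choose (m + 1) : ℝ) = n.choose m + n.choose (m + 1) := by
    exact_mod_cast Nat.choose_succ_succ' n m
  have absorb : ((n + 1).choose (m + 1) : ℝ) * (m + 1) = (n + 1) * n.choose m := by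
    exact_mod_cast (Nat.add_one_mul_choose_eq n m).symm
  have hl : (descPochhammer ℝ (m + 1)).eval (a + n) =
      (a + n) * (descPochhammer ℝ m).eval (a + n - 1) := by
    simp [descPochhammer_succ_left]
  have hr := descPochhammer_succ_eval m (a + n - 1)
  simp only [derivCoeff, pow_succ]
  push_cast
  rw [show a + (n + 1 : ℝ) - 1 = a + n by ring, hl, hr]
  linear_combination (-1) ^ m * (descPochhammer ℝ m).eval (a + n - 1) *
    (-absorb - (a + n - 1 - m) * pascal)

theorem derivSum_succ (n : ℕ) (s : ℝ) :
    derivSum a x (n + 1) s = ∑ m ∈ range (n + 1), derivCoeff a n m * x ^ (2 * (n - m)) *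
      (x ^ 2 * rpowExpInv x (a + 2 * n - m + 2) s -
        (a + 2 * n - m) * rpowExpInv x (a + 2 * n - m + 1) s) := by
  set F : ℕ → ℝ := fun m => x ^ (2 * (n + 1 - m)) * rpowExpInv x (a + 2 * (n + 1 : ℕ) - m) s
  have hF_succ : ∀ m ∈ range (n + 1),
      F (m + 1) = x ^ (2 * (n - m)) * rpowExpInv x (a + 2 * n - m + 1) s := by
    intro m hm
    simp only [F, Nat.add_sub_add_right]
    push_cast
    ring_nf
  have hF : ∀ m ∈ range (n + 1),
      F m = x ^ (2 * (n - m)) * (x ^ 2 * rpowExpInv x (a + 2 * n - m + 2) s) := by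
    intro m hm
    have hmn : n + 1 - m = n - m + 1 := by have := mem_range.mp hm; omega
    simp only [F, hmn]
    push_cast
    ring_nf
  have reindex : ∑ m ∈ range (n + 1), derivCoeff a n (m + 1) * F (m + 1) + F 0 =
      ∑ m ∈ range (n + 1), derivCoeff a n m * F m := by
    rw [← one_mul (F 0), ← derivCoeff_zero_right a n,
      ← sum_range_succ' (fun m => derivCoeff a n m * F m), sum_range_succ, derivCoeff_succ_self,
      zero_mul, add_zero]
  calc derivSum a x (n + 1) s
      = ∑ m ∈ range (n + 1), derivCoeff a (n + 1) (m + 1) * F (m + 1) + F 0 := by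
        simp only [derivSum, F, mul_assoc]
        rw [sum_range_succ']
        simp
    _ = ∑ m ∈ range (n + 1),
          (derivCoeff a n m * F m - (a + 2 * n - m) * derivCoeff a n m * F (m + 1)) := by
        simp only [derivCoeff_succ_succ, sub_mul, sum_sub_distrib, ← reindex]
        ring
    _ = _ := sum_congr rfl fun m hm => by rw [hF m hm, hF_succ m hm]; ring

theorem hasDerivAt_derivSum (n : ℕ) {s : ℝ} (hs : 0 < s) :
    HasDerivAt (derivSum a x n) (derivSum a x (n + 1) s) s := by
  rw [derivSum_succ]
  exact HasDerivAt.fun_sum fun m _ => (hasDerivAt_rpowExpInv x _ hs).const_mul _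

theorem derivSum_zero : derivSum a x 0 = rpowExpInv x a := by
  funext s
  simp [derivSum]

theorem iteratedDeriv_rpowExpInv (n : ℕ) {s : ℝ} (hs : 0 < s) :
    iteratedDeriv n (rpowExpInv x a) s = derivSum a x n s :=
  iteratedDeriv_eqOn_of_hasDerivAt isOpen_Ioi (by rw [derivSum_zero]; exact eqOn_refl _ _)
    (fun n _ hs => hasDerivAt_derivSum a x n hs) n hs

end derivSum

theorem stmt_4_general (t : ℝ) (ht : 0 < t) (x : ℝ) (n : ℕ) :
    iteratedDeriv n (fun s => g s x) t =
      x * Real.exp (-x ^ 2 / t) *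
        ∑ m ∈ Finset.range (n + 1),
          x ^ (2 * (n - m)) * t ^ (-(3 / 2 + 2 * (n : ℝ) - (m : ℝ))) * (-1 : ℝ) ^ m *
            (n.choose m : ℝ) * Real.Gamma (3 / 2 + (n : ℝ)) /
            Real.Gamma (3 / 2 + (n : ℝ) - (m : ℝ)) := by
  have hg : (fun s => g s x) = fun s => x * rpowExpInv x (3 / 2) s := by
    funext s
    simp only [g, rpowExpInv]
    ring
  rw [hg, iteratedDeriv_const_mul_field, iteratedDeriv_rpowExpInv _ _ _ ht, derivSum,
    mul_sum, mul_sum]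
  refine sum_congr rfl fun m hm => ?_
  have hmn : (m : ℝ) < 3 / 2 + n := by
    have : (m : ℝ) ≤ n := by exact_mod_cast mem_range_succ_iff.mp hm
    linarith
  have hGamma : Gamma (3 / 2 + n) / Gamma (3 / 2 + n - m) =
      (descPochhammer ℝ m).eval (3 / 2 + n - 1 : ℝ) := by
    rw [Gamma_eq_descPochhammer_eval_mul hmn,
      mul_div_cancel_right₀ _ (Gamma_pos_of_pos (by linarith)).ne']
  rw [mul_div_assoc, hGamma]
  simp only [derivCoeff, rpowExpInv]
  ring

/-- For every `t > 0`, `x ≥ 0` and `n : ℕ`, the `n`-th partial derivative of `g` in `t`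
is given by the closed formula involving binomial coefficients and the Gamma function. -/
theorem stmt_4 (t : ℝ) (ht : 0 < t) (x : ℝ) (hx : 0 ≤ x) (n : ℕ) :
    iteratedDeriv n (fun s => g s x) t =
      x * Real.exp (-x ^ 2 / t) *
        ∑ m ∈ Finset.range (n + 1),
          x ^ (2 * (n - m)) * t ^ (-(3 / 2 + 2 * (n : ℝ) - (m : ℝ))) * (-1 : ℝ) ^ m *
            (n.choose m : ℝ) * Real.Gamma (3 / 2 + (n : ℝ)) /
            Real.Gamma (3 / 2 + (n : ℝ) - (m : ℝ)) :=
  stmt_4_general t ht x n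
end

section
/- For every real x₀ > 0 there exists a constant C = C(x₀) > 0 such that for all x ∈ [0, x₀] and all n ∈ ℕ, |g^{(n)}(1,x)|/n! ≤ C·(n+1)·x. -/
open Real MeasureTheory Set Filter Topology
open scoped Nat

theorem integral_abs_pow_mul_exp_neg_mul_sq {b : ℝ} (hb : 0 < b) (k : ℕ) :
    ∫ y : ℝ, |y| ^ k * exp (-b * y ^ 2)
      = b ^ (-((k : ℝ) + 1) / 2) * Gamma (((k : ℝ) + 1) / 2) := by
  have hIoi : ∫ y in Ioi (0 : ℝ), y ^ k * exp (-b * y ^ 2)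
      = b ^ (-((k : ℝ) + 1) / 2) * (1 / 2) * Gamma (((k : ℝ) + 1) / 2) := by
    rw [← integral_rpow_mul_exp_neg_mul_rpow two_pos
      (neg_one_lt_zero.trans_le k.cast_nonneg) hb]
    refine setIntegral_congr_fun measurableSet_Ioi fun y _ => ?_
    norm_cast
  have habs := integral_comp_abs (f := fun y => y ^ k * exp (-b * y ^ 2))
  simp only [sq_abs] at habs
  rw [habs, hIoi]
  ring

theorem integrable_abs_pow_mul_exp_neg_mul_sq {b : ℝ} (hb : 0 < b) (k : ℕ) :
    Integrable fun y : ℝ => |y| ^ k * exp (-b * y ^ 2) := by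
  refine .of_integral_ne_zero ?_
  rw [integral_abs_pow_mul_exp_neg_mul_sq hb]
  have : 0 < ((k : ℝ) + 1) / 2 := by positivity
  exact (mul_pos (rpow_pos_of_pos hb _) (Gamma_pos_of_pos this)).ne'

theorem Real.Gamma_nat_add_three_halves_le (n : ℕ) :
    Gamma (n + 3 / 2) ≤ (n + 1)! := by
  have hmid : (n + 3 / 2 : ℝ)
      = (1 / 2 : ℝ) • ((n : ℝ) + 1) + (1 / 2 : ℝ) • ((n : ℝ) + 2) := by
    simp only [smul_eq_mul]; ring
  have hconv := convexOn_Gamma.2 (show (n : ℝ) + 1 ∈ Ioi 0 by simp; positivity)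
    (show (n : ℝ) + 2 ∈ Ioi 0 by simp; positivity) (by norm_num : (0 : ℝ) ≤ 1 / 2)
    (by norm_num : (0 : ℝ) ≤ 1 / 2) (by norm_num)
  have h2 : Gamma ((n : ℝ) + 2) = (n + 1)! := by exact_mod_cast Gamma_nat_eq_factorial (n + 1)
  rw [hmid]
  refine hconv.trans ?_
  rw [smul_eq_mul, smul_eq_mul, Gamma_nat_eq_factorial, h2, Nat.factorial_succ]
  push_cast
  nlinarith [(n.factorial_pos : 0 < n !), (Nat.cast_nonneg n : (0:ℝ) ≤ n)]

noncomputable def gaussLaplace (f : ℝ → ℝ) (t : ℝ) : ℝ := ∫ y, f y * exp (-t * y ^ 2)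

section GaussLaplace

variable {f : ℝ → ℝ} {C : ℝ} {k : ℕ}

theorem integrable_mul_exp_neg_mul_sq_of_abs_le (hf : AEStronglyMeasurable f)
    (hbound : ∀ y, |f y| ≤ C * |y| ^ k) {b : ℝ} (hb : 0 < b) :
    Integrable fun y => f y * exp (-b * y ^ 2) := by
  refine ((integrable_abs_pow_mul_exp_neg_mul_sq hb k).const_mul C).mono'
    (hf.mul (by fun_prop : Continuous fun y : ℝ => exp (-b * y ^ 2)).aestronglyMeasurable)
    (.of_forall fun y => ?_)
  rw [norm_mul, norm_of_nonneg (exp_pos _).le, ← mul_assoc]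
  exact mul_le_mul_of_nonneg_right (hbound y) (exp_pos _).le

theorem abs_neg_sq_pow_mul_le (hbound : ∀ y, |f y| ≤ C * |y| ^ k) (n : ℕ) (y : ℝ) :
    |(-y ^ 2) ^ n * f y| ≤ C * |y| ^ (2 * n + k) := by
  rw [abs_mul, abs_pow, abs_neg, abs_pow, pow_add, pow_mul, mul_left_comm]
  exact mul_le_mul_of_nonneg_left (hbound y) (by positivity)

theorem hasDerivAt_gaussLaplace (hf : AEStronglyMeasurable f)
    (hbound : ∀ y, |f y| ≤ C * |y| ^ k) {t : ℝ} (ht : 0 < t) :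
    HasDerivAt (gaussLaplace f) (gaussLaplace (fun y => -y ^ 2 * f y) t) t := by
  have hmeas : ∀ h : ℝ → ℝ, AEStronglyMeasurable h → ∀ s : ℝ,
      AEStronglyMeasurable fun y => h y * exp (-s * y ^ 2) := fun h hh s =>
    hh.mul (by fun_prop : Continuous fun y : ℝ => exp (-s * y ^ 2)).aestronglyMeasurable
  have hderiv : ∀ y s, HasDerivAt (fun s => f y * exp (-s * y ^ 2))
      (-y ^ 2 * f y * exp (-s * y ^ 2)) s := fun y s => by
    have h : HasDerivAt (fun s : ℝ => -s * y ^ 2) (-y ^ 2) s := by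
      simpa using (hasDerivAt_neg s).mul_const (y ^ 2)
    exact (h.exp.const_mul (f y)).congr_deriv (by ring)
  -- on `ball t (t / 2)` the weight `exp (-s y²)` is dominated by `exp (-(t / 2) y²)`
  have hdom : ∀ y, ∀ s ∈ Metric.ball t (t / 2),
      ‖-y ^ 2 * f y * exp (-s * y ^ 2)‖ ≤ C * (|y| ^ (k + 2) * exp (-(t / 2) * y ^ 2)) := by
    intro y s hs
    rw [Metric.mem_ball, Real.dist_eq, abs_lt] at hs
    have hexp : exp (-s * y ^ 2) ≤ exp (-(t / 2) * y ^ 2) :=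
      exp_le_exp.2 (by nlinarith [sq_nonneg y])
    rw [norm_mul, norm_mul, norm_neg, norm_of_nonneg (sq_nonneg y),
      norm_of_nonneg (exp_pos _).le, norm_eq_abs, pow_add, sq_abs]
    calc y ^ 2 * |f y| * exp (-s * y ^ 2)
        ≤ y ^ 2 * (C * |y| ^ k) * exp (-(t / 2) * y ^ 2) :=
          mul_le_mul (mul_le_mul_of_nonneg_left (hbound y) (sq_nonneg y)) hexp (exp_pos _).le
            (mul_nonneg (sq_nonneg y) ((abs_nonneg _).trans (hbound y)))
      _ = _ := by ring
  exact (hasDerivAt_integral_of_dominated_loc_of_deriv_le (Metric.ball_mem_nhds t (half_pos ht))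
    (.of_forall (hmeas f hf)) (integrable_mul_exp_neg_mul_sq_of_abs_le hf hbound ht)
    (hmeas _ ((continuous_pow 2).neg.aestronglyMeasurable.mul hf) t)
    (.of_forall hdom) ((integrable_abs_pow_mul_exp_neg_mul_sq (half_pos ht) _).const_mul C)
    (.of_forall fun y s _ => hderiv y s)).2

theorem iteratedDeriv_gaussLaplace (hf : AEStronglyMeasurable f)
    (hbound : ∀ y, |f y| ≤ C * |y| ^ k) (n : ℕ) {t : ℝ} (ht : 0 < t) :
    iteratedDeriv n (gaussLaplace f) t = gaussLaplace (fun y => (-y ^ 2) ^ n * f y) t := by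
  induction n generalizing t with
  | zero => simp
  | succ n ih =>
    have hg : AEStronglyMeasurable fun y => (-y ^ 2) ^ n * f y :=
      (by fun_prop : Continuous fun y : ℝ => (-y ^ 2) ^ n).aestronglyMeasurable.mul hf
    have heq : iteratedDeriv n (gaussLaplace f) =ᶠ[𝓝 t]
        gaussLaplace fun y => (-y ^ 2) ^ n * f y :=
      eventually_of_mem (Ioi_mem_nhds ht) fun s hs => ih hs
    rw [iteratedDeriv_succ, heq.deriv_eq,
      (hasDerivAt_gaussLaplace hg (abs_neg_sq_pow_mul_le hbound n) ht).deriv]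
    congr 1
    ext y
    ring

theorem abs_gaussLaplace_le (hbound : ∀ y, |f y| ≤ C * |y| ^ k)
    {t : ℝ} (ht : 0 < t) :
    |gaussLaplace f t| ≤ C * (t ^ (-((k : ℝ) + 1) / 2) * Gamma (((k : ℝ) + 1) / 2)) := by
  rw [gaussLaplace, ← norm_eq_abs, ← integral_abs_pow_mul_exp_neg_mul_sq ht,
    ← integral_const_mul (μ := volume) C fun y : ℝ => |y| ^ k * exp (-t * y ^ 2)]
  refine norm_integral_le_of_norm_le ((integrable_abs_pow_mul_exp_neg_mul_sq ht k).const_mul C)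
    (.of_forall fun y => ?_)
  rw [norm_mul, norm_of_nonneg (exp_pos _).le, norm_eq_abs, ← mul_assoc]
  exact mul_le_mul_of_nonneg_right (hbound y) (exp_pos _).le

theorem abs_iteratedDeriv_gaussLaplace_le (hf : AEStronglyMeasurable f)
    (hbound : ∀ y, |f y| ≤ C * |y| ^ k) (n : ℕ) {t : ℝ} (ht : 0 < t) :
    |iteratedDeriv n (gaussLaplace f) t| ≤
      C * (t ^ (-((2 * n + k : ℕ) + 1 : ℝ) / 2) *
        Gamma (((2 * n + k : ℕ) + 1 : ℝ) / 2)) := by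
  rw [iteratedDeriv_gaussLaplace hf hbound n ht]
  exact abs_gaussLaplace_le (abs_neg_sq_pow_mul_le hbound n) ht

end GaussLaplace

theorem integral_cos_mul_exp_neg_mul_sq {b : ℝ} (hb : 0 < b) (c : ℝ) :
    ∫ y : ℝ, cos (c * y) * exp (-b * y ^ 2) = √(π / b) * exp (-c ^ 2 / (4 * b)) := by
  have hcos : Integrable fun y : ℝ => cos (c * y) * exp (-b * y ^ 2) :=
    (integrable_exp_neg_mul_sq hb).bdd_mul (c := 1) (by fun_prop)
      (.of_forall fun y => abs_cos_le_one _)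
  have hsin : Integrable fun y : ℝ => sin (c * y) * exp (-b * y ^ 2) :=
    (integrable_exp_neg_mul_sq hb).bdd_mul (c := 1) (by fun_prop)
      (.of_forall fun y => abs_sin_le_one _)
  have hsplit : ∀ y : ℝ, Complex.exp (Complex.I * c * y) * Complex.exp (-b * y ^ 2)
      = ((cos (c * y) * exp (-b * y ^ 2) : ℝ) : ℂ)
        + Complex.I * ((sin (c * y) * exp (-b * y ^ 2) : ℝ) : ℂ) := fun y => by
    rw [show Complex.I * c * y = ((c * y : ℝ) : ℂ) * Complex.I by push_cast; ring,
      Complex.exp_mul_I]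
    push_cast
    ring
  have key := fourierIntegral_gaussian (b := b) (by simpa using hb) c
  simp only [hsplit] at key
  rw [integral_add hcos.ofReal (hsin.ofReal.const_mul _), integral_const_mul,
    integral_complex_ofReal, integral_complex_ofReal] at key
  have hrhs : (π / b : ℂ) ^ (1 / 2 : ℂ) * Complex.exp (-c ^ 2 / (4 * b))
      = ((√(π / b) * exp (-c ^ 2 / (4 * b)) : ℝ) : ℂ) := by
    rw [sqrt_eq_rpow, Complex.ofReal_mul, Complex.ofReal_cpow (by positivity)]
    push_cast
    rfl
  rw [hrhs] at key
  simpa only [Complex.add_re, Complex.ofReal_re, Complex.re_mul_ofReal, Complex.I_re, zero_mul,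
    add_zero] using congrArg Complex.re key

theorem integral_mul_sin_mul_exp_neg_mul_sq {b : ℝ} (hb : 0 < b) (c : ℝ) :
    ∫ y : ℝ, y * sin (c * y) * exp (-b * y ^ 2)
      = c / (2 * b) * (√(π / b) * exp (-c ^ 2 / (4 * b))) := by
  have hu : ∀ y : ℝ, HasDerivAt (fun y => sin (c * y)) (c * cos (c * y)) y := fun y => by
    simpa [mul_comm] using ((hasDerivAt_id y).const_mul c).sin
  have hv : ∀ y : ℝ, HasDerivAt (fun y => -exp (-b * y ^ 2) / (2 * b))
      (y * exp (-b * y ^ 2)) y := fun y => by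
    have h : HasDerivAt (fun y : ℝ => -b * y ^ 2) (-b * (2 * y)) y := by
      simpa using (hasDerivAt_pow 2 y).const_mul (-b)
    exact (h.exp.fun_neg.div_const (2 * b)).congr_deriv (by field_simp)
  have hexp : Integrable fun y : ℝ => -exp (-b * y ^ 2) / (2 * b) :=
    (integrable_exp_neg_mul_sq hb).neg.div_const _
  have hibp := integral_mul_deriv_eq_deriv_mul_of_integrable (fun y _ => hu y) (fun y _ => hv y)
    ((integrable_mul_exp_neg_mul_sq hb).bdd_mul (c := 1) (by fun_prop)
      (.of_forall fun y => abs_sin_le_one _))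
    (hexp.bdd_mul (c := |c|) (by fun_prop) (.of_forall fun y => by
      rw [norm_mul, norm_eq_abs]
      exact mul_le_of_le_one_right (abs_nonneg c) (abs_cos_le_one _)))
    (hexp.bdd_mul (c := 1) (by fun_prop) (.of_forall fun y => abs_sin_le_one _))
  calc ∫ y : ℝ, y * sin (c * y) * exp (-b * y ^ 2)
      = ∫ y : ℝ, sin (c * y) * (y * exp (-b * y ^ 2)) := by congr 1; ext y; ring
    _ = c / (2 * b) * ∫ y : ℝ, cos (c * y) * exp (-b * y ^ 2) := by
      rw [hibp, ← integral_const_mul, ← integral_neg]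
      congr 1; ext y; ring
    _ = _ := by rw [integral_cos_mul_exp_neg_mul_sq hb]

theorem g_eq_gaussLaplace (x : ℝ) {t : ℝ} (ht : 0 < t) :
    g t x = (√π)⁻¹ * gaussLaplace (fun y => y * sin (2 * x * y)) t := by
  have hsqrt : √(π / t) = √π / √t := sqrt_div' π ht.le
  have hrpow : t ^ (-(3 / 2) : ℝ) = (t * √t)⁻¹ := by
    rw [rpow_neg ht.le, show (3 / 2 : ℝ) = 1 + 1 / 2 by norm_num, rpow_add ht, rpow_one,
      ← sqrt_eq_rpow]
  have hexp : -(2 * x) ^ 2 / (4 * t) = -x ^ 2 / t := by field_simp; ring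
  rw [gaussLaplace, integral_mul_sin_mul_exp_neg_mul_sq ht, g, hsqrt, hrpow, hexp]
  have : 0 < √t := sqrt_pos.2 ht
  have : 0 < √π := sqrt_pos.2 pi_pos
  field_simp

theorem stmt_6_general (x₀ : ℝ) :
    ∃ C > (0 : ℝ), ∀ x ∈ Set.Icc (0 : ℝ) x₀, ∀ n : ℕ,
      |iteratedDeriv n (fun s => g s x) 1| / (n.factorial : ℝ) ≤ C * ((n : ℝ) + 1) * x := by
  refine ⟨2, two_pos, fun x ⟨hx, _⟩ n => ?_⟩
  have hbound : ∀ y, |y * sin (2 * x * y)| ≤ 2 * x * |y| ^ 2 := fun y => by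
    have hsin : |sin (2 * x * y)| ≤ 2 * x * |y| := by
      simpa [abs_mul, abs_of_nonneg hx] using abs_sin_le_abs (x := 2 * x * y)
    rw [abs_mul, sq]
    nlinarith [abs_nonneg y]
  have hrep : iteratedDeriv n (fun s => g s x) 1
      = (√π)⁻¹ * iteratedDeriv n (gaussLaplace fun y => y * sin (2 * x * y)) 1 := by
    rw [← iteratedDeriv_const_mul_field]
    exact EventuallyEq.iteratedDeriv_eq n <|
      eventually_of_mem (Ioi_mem_nhds one_pos) fun s hs => g_eq_gaussLaplace x hs
  have hI := abs_iteratedDeriv_gaussLaplace_le (by fun_prop) hbound n one_pos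
  rw [one_rpow, one_mul,
    show ((2 * n + 2 : ℕ) + 1 : ℝ) / 2 = n + 3 / 2 by push_cast; ring] at hI
  have hπ : (√π)⁻¹ ≤ 1 :=
    inv_le_one_of_one_le₀ (one_le_sqrt.2 (by linarith [pi_gt_three]))
  rw [hrep, div_le_iff₀ (by positivity), abs_mul, abs_of_pos (by positivity)]
  calc (√π)⁻¹ * |iteratedDeriv n (gaussLaplace fun y => y * sin (2 * x * y)) 1|
      ≤ 1 * (2 * x * (n + 1)!) := by
        gcongr
        exact hI.trans (mul_le_mul_of_nonneg_left (Gamma_nat_add_three_halves_le n) (by positivity))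
    _ = 2 * (n + 1) * x * n ! := by push_cast [Nat.factorial_succ]; ring

/-- For every `x₀ > 0` there is `C > 0` such that for all `x ∈ [0,x₀]` and all `n : ℕ`,
`|g^{(n)}(1,x)| / n! ≤ C (n+1) x`. -/
theorem stmt_6 (x₀ : ℝ) (hx₀ : 0 < x₀) :
    ∃ C > (0 : ℝ), ∀ x ∈ Set.Icc (0 : ℝ) x₀, ∀ n : ℕ,
      |iteratedDeriv n (fun s => g s x) 1| / (n.factorial : ℝ) ≤ C * ((n : ℝ) + 1) * x :=
  stmt_6_general x₀
end

section
/- For every natural number N ≥ 1, the series ∑_{n=N³+1}^{∞} (n+1)·(1 − 1/N)^n converges and satisfies ∑_{n=N³+1}^{∞} (n+1)·(1 − 1/N)^n ≤ e^{−N²}·(N²+1)². -/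
/-!
The tail `∑_{n ≥ m} (n+1) rⁿ` of the differentiated geometric series has the closed form
`rᵐ (m + 1 - m r) / (1 - r)²`; for `r = 1 - 1/N` and `m = N³ + 1` this is
`r^(N³+1) (N⁴ + N² + N)`. Writing `r = 1 - N²/N³` gives `r^(N³) ≤ e^(-N²)`, and
`N⁴ + N² + N ≤ (N² + 1)²`.
-/

open Real

theorem hasSum_succ_mul_geometric_nat_add {𝕜 : Type*} [NormedField 𝕜] [CompleteSpace 𝕜]
    {r : 𝕜} (hr : ‖r‖ < 1) (m : ℕ) :
    HasSum (fun n : ℕ => (((n + m : ℕ) : 𝕜) + 1) * r ^ (n + m))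
      (r ^ m * (m + 1 - m * r) / (1 - r) ^ 2) := by
  have hr1 : 1 - r ≠ 0 := (isUnit_one_sub_of_norm_lt_one hr).ne_zero
  have hsplit := ((hasSum_coe_mul_geometric_of_norm_lt_one hr).mul_left (r ^ m)).add
    ((hasSum_geometric_of_norm_lt_one hr).mul_left (r ^ m * (m + 1)))
  have hvalue : r ^ m * (m + 1 - m * r) / (1 - r) ^ 2
      = r ^ m * (r / (1 - r) ^ 2) + r ^ m * (m + 1) * (1 - r)⁻¹ := by
    field_simp
    ring
  rw [hvalue]
  refine hsplit.congr_fun fun n => ?_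
  push_cast
  ring

theorem one_sub_inv_pow_cube_le_exp_neg_sq (N : ℕ) :
    (1 - 1 / (N : ℝ)) ^ (N ^ 3) ≤ exp (-(N : ℝ) ^ 2) := by
  rcases N.eq_zero_or_pos with rfl | hN
  · simp
  have hle : ((N : ℝ) ^ 2) ≤ ((N ^ 3 : ℕ) : ℝ) := by
    exact_mod_cast Nat.pow_le_pow_right hN (by norm_num)
  convert one_sub_div_pow_le_exp_neg hle using 3
  push_cast
  field_simp

/-- For every `N ≥ 1`, `∑_{n=N³+1}^∞ (n+1)(1 - 1/N)^n` converges and is at most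
`e^{-N²} (N²+1)²`. -/
theorem stmt_11 (N : ℕ) (hN : 1 ≤ N) :
    Summable (fun n : ℕ => (((n + N ^ 3 + 1 : ℕ) : ℝ) + 1) * (1 - 1 / (N : ℝ)) ^ (n + N ^ 3 + 1)) ∧
    ∑' n : ℕ, (((n + N ^ 3 + 1 : ℕ) : ℝ) + 1) * (1 - 1 / (N : ℝ)) ^ (n + N ^ 3 + 1)
      ≤ Real.exp (-(N : ℝ) ^ 2) * ((N : ℝ) ^ 2 + 1) ^ 2 := by
  have hN₀ : (1 : ℝ) ≤ N := by exact_mod_cast hN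
  have hinv_pos : 0 < 1 / (N : ℝ) := by positivity
  have hinv_le : 1 / (N : ℝ) ≤ 1 := div_le_one_of_le₀ hN₀ N.cast_nonneg
  set r : ℝ := 1 - 1 / (N : ℝ) with hr_def
  have hr₀ : 0 ≤ r := by linarith
  have hr₁ : r ≤ 1 := by linarith
  have hr : ‖r‖ < 1 := by rw [Real.norm_of_nonneg hr₀]; linarith
  have hsum := hasSum_succ_mul_geometric_nat_add hr (N ^ 3 + 1)
  simp only [← add_assoc] at hsum
  refine ⟨hsum.summable, ?_⟩
  have hclosed : r ^ (N ^ 3 + 1) * (((N ^ 3 + 1 : ℕ) : ℝ) + 1 - ((N ^ 3 + 1 : ℕ) : ℝ) * r)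
      / (1 - r) ^ 2 = r ^ (N ^ 3 + 1) * ((N : ℝ) ^ 4 + (N : ℝ) ^ 2 + N) := by
    rw [hr_def]
    push_cast
    field_simp
    ring
  rw [hsum.tsum_eq, hclosed]
  calc r ^ (N ^ 3 + 1) * ((N : ℝ) ^ 4 + (N : ℝ) ^ 2 + N)
      ≤ r ^ (N ^ 3) * ((N : ℝ) ^ 4 + (N : ℝ) ^ 2 + N) :=
        mul_le_mul_of_nonneg_right (pow_le_pow_of_le_one hr₀ hr₁ (Nat.le_succ _)) (by positivity)
    _ ≤ exp (-(N : ℝ) ^ 2) * ((N : ℝ) ^ 2 + 1) ^ 2 := by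
        gcongr
        · exact one_sub_inv_pow_cube_le_exp_neg_sq N
        · nlinarith
end

section
/- Let g : ℝ → ℝ be continuous and 2π-periodic, and let a₀ = (1/π)·∫₀^{2π} g(τ) dτ, aₖ = (1/π)·∫₀^{2π} g(τ)·sin(kτ) dτ and bₖ = (1/π)·∫₀^{2π} g(τ)·cos(kτ) dτ for k ≥ 1. Then for every r ∈ [0,1) and every θ ∈ ℝ, the Poisson integral equals the Fourier series: (1/2π)·∫_{−π}^{π} g(τ)·(1 − r²)/(1 − 2r·cos(θ−τ) + r²) dτ = a₀/2 + ∑_{k=1}^{∞} r^k·(aₖ·sin(kθ) + bₖ·cos(kθ)), the series on the right converging absolutely. -/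
/-!
For `|r| < 1` the Poisson kernel is `(1 - r²)/(1 - 2r cos φ + r²) = 2 Q_r(φ) - 1`, where
`Q_r(φ) = (1 - r cos φ)/(1 - 2r cos φ + r²) = Re (1 - r e^{iφ})⁻¹ = ∑ₖ rᵏ cos kφ`.
The terms of this series are bounded by `|r|ᵏ`, so by dominated convergence it can be integrated
termwise against `g`. Since `cos (k(θ - τ)) = cos kθ cos kτ + sin kθ sin kτ` and `g` is
`2π`-periodic, the `k`-th integral is `π rᵏ (aₖ sin kθ + bₖ cos kθ)`; for `k = 0` it is `π a₀`,
and the `-1` in the kernel removes half of it. Absolute convergence follows from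
`|aₖ|, |bₖ| ≤ π⁻¹ ∫ |g|`.
-/

open Real Set MeasureTheory

lemma one_sub_two_mul_mul_cos_add_sq_pos {r : ℝ} (hr : |r| < 1) (φ : ℝ) :
    0 < 1 - 2 * r * cos φ + r ^ 2 := by
  have hcos : r * cos φ ≤ |r| := (le_abs_self _).trans <| by
    rw [abs_mul]
    exact mul_le_of_le_one_right (abs_nonneg r) (abs_cos_le_one φ)
  nlinarith [sq_abs r]

lemma one_sub_sq_div_eq_two_mul_sub_one {r : ℝ} (hr : |r| < 1) (φ : ℝ) :
    (1 - r ^ 2) / (1 - 2 * r * cos φ + r ^ 2) =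
      2 * ((1 - r * cos φ) / (1 - 2 * r * cos φ + r ^ 2)) - 1 := by
  rw [eq_sub_iff_add_eq, mul_div_assoc',
    div_add_one (one_sub_two_mul_mul_cos_add_sq_pos hr φ).ne']
  ring

lemma hasSum_pow_mul_cos {r : ℝ} (hr : |r| < 1) (φ : ℝ) :
    HasSum (fun k : ℕ => r ^ k * cos (k * φ))
      ((1 - r * cos φ) / (1 - 2 * r * cos φ + r ^ 2)) := by
  set z : ℂ := r * Complex.exp (φ * Complex.I)
  have hz : ‖z‖ < 1 := by
    rwa [norm_mul, Complex.norm_real, Complex.norm_exp_ofReal_mul_I, mul_one, Real.norm_eq_abs]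
  have hz_pow_re (k : ℕ) : (z ^ k).re = r ^ k * cos (k * φ) := by
    rw [mul_pow, ← Complex.exp_nat_mul, ← mul_assoc, ← Complex.ofReal_pow,
      ← Complex.ofReal_natCast, ← Complex.ofReal_mul, Complex.re_ofReal_mul,
      Complex.exp_ofReal_mul_I_re]
  have hz_re : (1 - z).re = 1 - r * cos φ := by
    simp [z, Complex.exp_ofReal_mul_I_re]
  have hz_normSq : Complex.normSq (1 - z) = 1 - 2 * r * cos φ + r ^ 2 := by
    rw [Complex.normSq_apply, hz_re]
    simp only [z, Complex.sub_im, Complex.one_im, Complex.im_ofReal_mul,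
      Complex.exp_ofReal_mul_I_im]
    nlinarith [sin_sq_add_cos_sq φ]
  simpa [hz_pow_re, Complex.inv_re, hz_re, hz_normSq] using
    Complex.hasSum_re (hasSum_geometric_of_norm_lt_one hz)

lemma hasSum_pow_mul_integral_mul_cos {g : ℝ → ℝ} {a b r : ℝ}
    (hg : IntervalIntegrable g volume a b) (hr : |r| < 1) (θ : ℝ) :
    HasSum (fun k : ℕ => r ^ k * ∫ τ in a..b, g τ * cos (k * (θ - τ)))
      (∫ τ in a..b, g τ * ((1 - r * cos (θ - τ)) / (1 - 2 * r * cos (θ - τ) + r ^ 2))) := by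
  simp_rw [← intervalIntegral.integral_const_mul]
  refine intervalIntegral.hasSum_integral_of_dominated_convergence
    (fun k τ => |r| ^ k * |g τ|) (fun k => ?_) (fun k => ?_) ?_ ?_ ?_
  · refine (hg.mul_continuousOn ?_).def'.aestronglyMeasurable.const_mul _
    fun_prop
  · refine .of_forall fun τ _ => ?_
    rw [norm_mul, norm_mul, Real.norm_eq_abs, Real.norm_eq_abs, abs_pow]
    exact mul_le_mul_of_nonneg_left
      (mul_le_of_le_one_right (abs_nonneg _) (abs_cos_le_one _)) (by positivity)
  · exact .of_forall fun τ _ => (summable_geometric_of_lt_one (abs_nonneg r) hr).mul_right _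
  · simp_rw [tsum_mul_right, tsum_geometric_of_lt_one (abs_nonneg r) hr]
    exact hg.abs.const_mul _
  · refine .of_forall fun τ _ => ?_
    simpa [mul_left_comm (r ^ _)] using (hasSum_pow_mul_cos hr (θ - τ)).mul_left (g τ)

lemma Function.Periodic.intervalIntegral_neg_pi_pi {E : Type*} [NormedAddCommGroup E]
    [NormedSpace ℝ E] {f : ℝ → E} (hf : Function.Periodic f (2 * π)) :
    ∫ x in -π..π, f x = ∫ x in 0..2 * π, f x := by
  simpa [show -π + 2 * π = π by ring] using hf.intervalIntegral_add_eq (-π) 0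

lemma Function.Periodic.intervalIntegral_mul_cos_sub {g : ℝ → ℝ}
    (hper : Function.Periodic g (2 * π)) (hg : IntervalIntegrable g volume 0 (2 * π))
    (k : ℕ) (θ : ℝ) :
    ∫ τ in -π..π, g τ * cos (k * (θ - τ)) =
      sin (k * θ) * (∫ τ in 0..2 * π, g τ * sin (k * τ)) +
        cos (k * θ) * ∫ τ in 0..2 * π, g τ * cos (k * τ) := by
  have hcos : Function.Periodic (fun τ => cos (k * (θ - τ))) (2 * π) := fun τ => by
    simp only [show k * (θ - (τ + 2 * π)) = k * (θ - τ) - k * (2 * π) by ring,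
      cos_sub_nat_mul_two_pi]
  have hprod : Function.Periodic (fun τ => g τ * cos (k * (θ - τ))) (2 * π) := hper.mul hcos
  rw [hprod.intervalIntegral_neg_pi_pi, ← intervalIntegral.integral_const_mul,
    ← intervalIntegral.integral_const_mul, ← intervalIntegral.integral_add]
  · refine intervalIntegral.integral_congr fun τ _ => ?_
    simp only [mul_sub, cos_sub]
    ring
  all_goals exact (hg.mul_continuousOn (by fun_prop)).const_mul _

lemma abs_integral_mul_le_integral_abs {g f : ℝ → ℝ} {a b : ℝ} (hab : a ≤ b)
    (hg : IntervalIntegrable g volume a b) (hf : ∀ x, |f x| ≤ 1) :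
    |∫ x in a..b, g x * f x| ≤ ∫ x in a..b, |g x| :=
  intervalIntegral.norm_integral_le_of_norm_le hab (.of_forall fun x _ => by
    rw [Real.norm_eq_abs, abs_mul]
    exact mul_le_of_le_one_right (abs_nonneg _) (hf x)) hg.abs

lemma summable_abs_pow_mul_sin_add_cos {a b : ℕ → ℝ} {A r : ℝ} (ha : ∀ k, |a k| ≤ A)
    (hb : ∀ k, |b k| ≤ A) (hr : |r| < 1) (θ : ℝ) :
    Summable fun k : ℕ => |r ^ k * (a k * sin (k * θ) + b k * cos (k * θ))| := by
  refine .of_nonneg_of_le (fun k => abs_nonneg _) (fun k => ?_)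
    ((summable_geometric_of_lt_one (abs_nonneg r) hr).mul_left (2 * A))
  calc |r ^ k * (a k * sin (k * θ) + b k * cos (k * θ))|
      ≤ |r| ^ k * (|a k| * 1 + |b k| * 1) := by
        rw [abs_mul, abs_pow]
        gcongr
        refine (abs_add_le _ _).trans ?_
        rw [abs_mul, abs_mul]
        gcongr
        exacts [abs_sin_le_one _, abs_cos_le_one _]
    _ ≤ 2 * A * |r| ^ k := by nlinarith [ha k, hb k, pow_nonneg (abs_nonneg r) k]

lemma summable_abs_pow_mul_fourier {g : ℝ → ℝ} {a b : ℕ → ℝ} {r : ℝ}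
    (hg : IntervalIntegrable g volume 0 (2 * π))
    (ha : ∀ k : ℕ, a k = 1 / π * ∫ τ in 0..2 * π, g τ * sin (k * τ))
    (hb : ∀ k : ℕ, b k = 1 / π * ∫ τ in 0..2 * π, g τ * cos (k * τ)) (hr : |r| < 1) (θ : ℝ) :
    Summable fun k : ℕ => |r ^ k * (a k * sin (k * θ) + b k * cos (k * θ))| := by
  have hcoef (f : ℝ → ℝ) (hf : ∀ x, |f x| ≤ 1) :
      |1 / π * ∫ τ in 0..2 * π, g τ * f τ| ≤ 1 / π * ∫ τ in 0..2 * π, |g τ| := by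
    rw [abs_mul, abs_of_pos (by positivity)]
    gcongr
    exact abs_integral_mul_le_integral_abs (by positivity) hg hf
  exact summable_abs_pow_mul_sin_add_cos (fun k => ha k ▸ hcoef _ fun _ => abs_sin_le_one _)
    (fun k => hb k ▸ hcoef _ fun _ => abs_cos_le_one _) hr θ

lemma hasSum_pow_mul_fourier {g : ℝ → ℝ} {a b : ℕ → ℝ} {r : ℝ}
    (hper : Function.Periodic g (2 * π)) (hg : IntervalIntegrable g volume 0 (2 * π))
    (ha : ∀ k : ℕ, a k = 1 / π * ∫ τ in 0..2 * π, g τ * sin (k * τ))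
    (hb : ∀ k : ℕ, b k = 1 / π * ∫ τ in 0..2 * π, g τ * cos (k * τ)) (hr : |r| < 1) (θ : ℝ) :
    HasSum (fun k : ℕ => r ^ k * (a k * sin (k * θ) + b k * cos (k * θ)))
      (1 / π * ∫ τ in -π..π,
        g τ * ((1 - r * cos (θ - τ)) / (1 - 2 * r * cos (θ - τ) + r ^ 2))) := by
  have hterm (k : ℕ) : 1 / π * (r ^ k * ∫ τ in -π..π, g τ * cos (k * (θ - τ))) =
      r ^ k * (a k * sin (k * θ) + b k * cos (k * θ)) := by
    rw [hper.intervalIntegral_mul_cos_sub hg, ha, hb]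
    ring
  simpa only [hterm] using (hasSum_pow_mul_integral_mul_cos
    (hper.intervalIntegrable₀ two_pi_pos.ne' hg (-π) π) hr θ).mul_left (1 / π)

lemma intervalIntegral_mul_poissonKernel_eq {g : ℝ → ℝ} {r : ℝ}
    (hper : Function.Periodic g (2 * π)) (hg : IntervalIntegrable g volume 0 (2 * π))
    (hr : |r| < 1) (θ : ℝ) :
    ∫ τ in -π..π, g τ * (1 - r ^ 2) / (1 - 2 * r * cos (θ - τ) + r ^ 2) =
      2 * (∫ τ in -π..π, g τ * ((1 - r * cos (θ - τ)) / (1 - 2 * r * cos (θ - τ) + r ^ 2))) -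
        ∫ τ in 0..2 * π, g τ := by
  have hg' : IntervalIntegrable g volume (-π) π := hper.intervalIntegrable₀ two_pi_pos.ne' hg _ _
  simp_rw [mul_div_assoc, one_sub_sq_div_eq_two_mul_sub_one hr, mul_sub, mul_one,
    mul_left_comm (g _) 2]
  rw [intervalIntegral.integral_sub, intervalIntegral.integral_const_mul,
    hper.intervalIntegral_neg_pi_pi]
  · refine (hg'.mul_continuousOn ?_).const_mul _
    exact ContinuousOn.div (by fun_prop) (by fun_prop)
      fun τ _ => (one_sub_two_mul_mul_cos_add_sq_pos hr _).ne'
  · exact hg'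

/-- Poisson integral equals Fourier series: for `g` continuous and `2π`-periodic with
Fourier coefficients `a₀`, `a k`, `b k`, for every `r ∈ [0,1)` and `θ ∈ ℝ`,
`(1/2π) ∫_{-π}^{π} g(τ) (1-r²)/(1-2r cos(θ-τ)+r²) dτ
  = a₀/2 + ∑_{k=1}^∞ r^k (aₖ sin(kθ) + bₖ cos(kθ))`,
the series on the right converging absolutely. -/
theorem stmt_19 (g : ℝ → ℝ) (hg : Continuous g)
    (hper : ∀ τ, g (τ + 2 * Real.pi) = g τ)
    (a₀ : ℝ) (ha₀ : a₀ = (1 / Real.pi) * ∫ τ in (0 : ℝ)..(2 * Real.pi), g τ)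
    (a b : ℕ → ℝ)
    (ha : ∀ k : ℕ, a k = (1 / Real.pi) * ∫ τ in (0 : ℝ)..(2 * Real.pi),
      g τ * Real.sin ((k : ℝ) * τ))
    (hb : ∀ k : ℕ, b k = (1 / Real.pi) * ∫ τ in (0 : ℝ)..(2 * Real.pi),
      g τ * Real.cos ((k : ℝ) * τ))
    (r : ℝ) (hr : r ∈ Set.Ico (0 : ℝ) 1) (θ : ℝ) :
    Summable (fun k : ℕ =>
      |r ^ (k + 1) * (a (k + 1) * Real.sin (((k + 1 : ℕ) : ℝ) * θ)
        + b (k + 1) * Real.cos (((k + 1 : ℕ) : ℝ) * θ))|) ∧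
    (1 / (2 * Real.pi)) * ∫ τ in (-Real.pi)..Real.pi,
        g τ * (1 - r ^ 2) / (1 - 2 * r * Real.cos (θ - τ) + r ^ 2)
      = a₀ / 2 + ∑' k : ℕ, r ^ (k + 1) *
          (a (k + 1) * Real.sin (((k + 1 : ℕ) : ℝ) * θ)
            + b (k + 1) * Real.cos (((k + 1 : ℕ) : ℝ) * θ)) := by
  have hr' : |r| < 1 := abs_lt.mpr ⟨by linarith [hr.1], hr.2⟩
  have hgi : IntervalIntegrable g volume 0 (2 * π) := hg.intervalIntegrable _ _
  have htail := (hasSum_nat_add_iff' 1).mpr (hasSum_pow_mul_fourier hper hgi ha hb hr' θ)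
  refine ⟨(summable_nat_add_iff 1).mpr (summable_abs_pow_mul_fourier hgi ha hb hr' θ), ?_⟩
  rw [htail.tsum_eq, intervalIntegral_mul_poissonKernel_eq hper hgi hr' θ]
  have hb0 : b 0 = a₀ := by simp [hb, ha₀]
  simp only [Finset.sum_range_one, pow_zero, CharP.cast_eq_zero, zero_mul, sin_zero, cos_zero,
    hb0, ha₀]
  ring
end
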